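/- arXiv:math-ph/0407043 — 3 statements merged into one kernel-verified Lean document; each statement's English description precedes it below -/
import Mathlib

section
/- The sequence A_p defined by the M_+ recursion satisfies the three-term A-polynomial recursion of the twist knots: A_{p+1} = −X·A_p − m⁴(ℓ+m²)⁴·A_{p-1}, where X = −ℓ + ℓ² + 2ℓm² + m⁴ + 2ℓm⁴ + ℓ²m⁴ + 2ℓm⁶ + m⁸ − ℓm⁸. -/
open MvPolynomial

noncomputable section

/-- The polynomial ring ℚ[ℓ, m] realized as `MvPolynomial (Fin 2) ℚ`. -/
abbrev R2 : Type := MvPolynomial (Fin 2) ℚ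

/-- The variable ℓ. -/
def lvar : R2 := X 0

/-- The variable m. -/
def mvar : R2 := X 1

/-- The polynomial Z(ℓ,m). -/
def Zp : R2 :=
  -lvar + lvar ^ 2 + 2 * lvar * mvar ^ 2 - lvar ^ 2 * mvar ^ 2 + mvar ^ 4 + lvar ^ 2 * mvar ^ 4
    - mvar ^ 6 + 2 * lvar * mvar ^ 6 + mvar ^ 8 - lvar * mvar ^ 8

/-- The matrix M₊. -/
def Mplus : Matrix (Fin 2) (Fin 2) R2 :=
  !![-Zp, -((1 - mvar ^ 2) * (lvar - mvar ^ 4));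
     mvar ^ 2 * (lvar + mvar ^ 2) ^ 2 * (1 - lvar) * (1 - mvar ^ 2), -(mvar ^ 2 * (lvar + mvar ^ 2) ^ 2)]

/-- The matrix M₋. -/
def Mminus : Matrix (Fin 2) (Fin 2) R2 :=
  !![mvar ^ 2 * (lvar + mvar ^ 2) ^ 2, -((1 - mvar ^ 2) * (lvar - mvar ^ 4));
     (1 - lvar) * (1 - mvar ^ 2) * mvar ^ 2 * (lvar + mvar ^ 2) ^ 2, Zp]

end

/-- The polynomial X(ℓ,m). -/
noncomputable def Xp : R2 :=
  -lvar + lvar ^ 2 + 2 * lvar * mvar ^ 2 + mvar ^ 4 + 2 * lvar * mvar ^ 4 + lvar ^ 2 * mvar ^ 4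
    + 2 * lvar * mvar ^ 6 + mvar ^ 8 - lvar * mvar ^ 8

theorem stmt_13 (A B : ℕ → R2)
    (hA1 : A 1 = lvar + mvar ^ 6)
    (hB1 : B 1 = mvar ^ 2 * (lvar + mvar ^ 2) ^ 2)
    (hrec : ∀ p, 1 ≤ p →
      A (p + 1) = -Zp * A p - (1 - mvar ^ 2) * (lvar - mvar ^ 4) * B p ∧
      B (p + 1) = mvar ^ 2 * (lvar + mvar ^ 2) ^ 2 * (1 - lvar) * (1 - mvar ^ 2) * A p
        - mvar ^ 2 * (lvar + mvar ^ 2) ^ 2 * B p) :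
    ∀ p, 2 ≤ p →
      A (p + 1) = -Xp * A p - mvar ^ 4 * (lvar + mvar ^ 2) ^ 4 * A (p - 1) := by
  intro p hp
  obtain ⟨q, rfl⟩ : ∃ q, p = q + 2 := ⟨p - 2, by omega⟩
  obtain ⟨hA2, hB2⟩ := hrec (q + 1) (by omega)
  obtain ⟨hA3, hB3⟩ := hrec (q + 2) (by omega)
  show A (q + 2 + 1) = -Xp * A (q + 2) - mvar ^ 4 * (lvar + mvar ^ 2) ^ 4 * A (q + 1)
  rw [hA3, hB2, hA2]
  simp only [Xp, Zp]
  ring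
end

section
/- The sequences A_{-p}, B_{-p} defined by the M_− recursion satisfy B_{-p-1} − (1−ℓ)(1−m²)A_{-p-1} = m²(ℓ+m²)²·B_{-p} for all p ≥ 0. -/
open MvPolynomial

theorem stmt_14 (A B : ℕ → R2)
    (hA0 : A 0 = 1)
    (hB0 : B 0 = 1 + lvar * mvar ^ 2)
    (hrec : ∀ p,
      A (p + 1) = mvar ^ 2 * (lvar + mvar ^ 2) ^ 2 * A p - (1 - mvar ^ 2) * (lvar - mvar ^ 4) * B p ∧
      B (p + 1) = (1 - lvar) * (1 - mvar ^ 2) * mvar ^ 2 * (lvar + mvar ^ 2) ^ 2 * A p + Zp * B p) :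
    ∀ p, B (p + 1) - (1 - lvar) * (1 - mvar ^ 2) * A (p + 1) =
      mvar ^ 2 * (lvar + mvar ^ 2) ^ 2 * B p := by
  intro p
  rw [(hrec p).1, (hrec p).2, Zp]
  ring
end

section
/- The sequence A_{-p} defined by the M_− recursion satisfies A_{-p-1} = X·A_{-p} − m⁴(ℓ+m²)⁴·A_{-p+1} for p ≥ 1, where X = −ℓ + ℓ² + 2ℓm² + m⁴ + 2ℓm⁴ + ℓ²m⁴ + 2ℓm⁶ + m⁸ − ℓm⁸, with A_0 = 1 and A_{-1} = −ℓ + ℓm² + m⁴ + 2ℓm⁴ + ℓ²m⁴ + ℓm⁶ − ℓm⁸. -/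
open MvPolynomial

/-- Here `A p` and `B p` denote `A_{-p}` and `B_{-p}` of the paper. -/
theorem stmt_15 (A B : ℕ → R2)
    (hA0 : A 0 = 1)
    (hB0 : B 0 = 1 + lvar * mvar ^ 2)
    (hA1 : A 1 = -lvar + lvar * mvar ^ 2 + mvar ^ 4 + 2 * lvar * mvar ^ 4 + lvar ^ 2 * mvar ^ 4
      + lvar * mvar ^ 6 - lvar * mvar ^ 8)
    (hrec : ∀ p,
      A (p + 1) = mvar ^ 2 * (lvar + mvar ^ 2) ^ 2 * A p - (1 - mvar ^ 2) * (lvar - mvar ^ 4) * B p ∧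
      B (p + 1) = (1 - lvar) * (1 - mvar ^ 2) * mvar ^ 2 * (lvar + mvar ^ 2) ^ 2 * A p + Zp * B p) :
    ∀ p, 1 ≤ p →
      A (p + 1) = Xp * A p - mvar ^ 4 * (lvar + mvar ^ 2) ^ 4 * A (p - 1) := by
  intro p hp
  obtain ⟨q, rfl⟩ := Nat.exists_eq_add_of_le hp
  have h1 := (hrec q).1
  have h2 := (hrec q).2
  have h3 := (hrec (q + 1)).1
  have e1 : 1 + q + 1 = q + 1 + 1 := by ring
  have e2 : 1 + q = q + 1 := by ring
  have e3 : q + 1 - 1 = q := by omega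
  rw [e1, e2, e3, h3, h2]
  unfold Xp Zp at *
  linear_combination (-(-lvar + lvar ^ 2 + 2 * lvar * mvar ^ 2 - lvar ^ 2 * mvar ^ 2 + mvar ^ 4
    + lvar ^ 2 * mvar ^ 4 - mvar ^ 6 + 2 * lvar * mvar ^ 6 + mvar ^ 8 - lvar * mvar ^ 8)) * h1
end
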